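/- Let N be an even positive integer and k an odd positive integer, and let m be a divisor of N such that 2*m^2 divides N*k. Then the number of divisors d of N/2 satisfying gcd(d, N*k/(2*d)) = m is exactly 2^(p_m + t_m). -/

import Mathlib

/-!
Write `N = 2n` and `M = nk`; the divisors counted are the `d ∣ n` with `gcd(d, M/d) = m`.
Prime by prime this says `min(v_p d, v_p M - v_p d) = v_p m`, i.e.
`v_p d ∈ {v_p m, v_p M - v_p m}`, and the second value is a genuine alternative exactly when
`2 v_p m < v_p M` and `v_p M - v_p m ≤ v_p n`. Hence the count is `2^r`, `r` the number of such
primes. For odd `p` the two conditions say `p ∣ N m'/m²` and `p ∤ k/m'`; for `p = 2` (`k` odd) they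
say `4 ∣ N m'/m²`, which is what `t_m` records.
-/

/-- `p_m`: the number of odd primes dividing `N*m'/m^2` but not `k/m'`, where `m' = gcd(m,k)`. -/
def pm (N k m : ℕ) : ℕ :=
  ((N * Nat.gcd m k / m ^ 2).primeFactors.filter
    (fun p => p ≠ 2 ∧ ¬ p ∣ k / Nat.gcd m k)).card

/-- `t_m`: equal to `0` if `N*m'/m^2` is odd, or `4 ∣ k/m'`, or both
`N*m'/m^2 ≡ 2 (mod 4)` and `k/m'` is odd; and equal to `1` otherwise. -/
def tm (N k m : ℕ) : ℕ :=
  if Odd (N * Nat.gcd m k / m ^ 2) ∨ 4 ∣ k / Nat.gcd m k ∨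
      ((N * Nat.gcd m k / m ^ 2) % 4 = 2 ∧ Odd (k / Nat.gcd m k)) then 0 else 1

open Finset

theorem Nat.mem_primeFactors_iff_factorization_ne_zero {n p : ℕ} :
    p ∈ n.primeFactors ↔ n.factorization p ≠ 0 := by
  rw [← Nat.support_factorization, Finsupp.mem_support_iff]

theorem Nat.factorization_mul_prod_pow {m : ℕ} (hm : m ≠ 0) {A : Finset ℕ}
    (hA : ∀ p ∈ A, p.Prime) (e : ℕ → ℕ) (q : ℕ) :
    (m * ∏ p ∈ A, p ^ e p).factorization q = m.factorization q + if q ∈ A then e q else 0 := by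
  have hpow : ∀ p ∈ A, p ^ e p ≠ 0 := fun p hp => pow_ne_zero _ (hA p hp).ne_zero
  rw [Nat.factorization_mul hm (prod_ne_zero_iff.mpr hpow), Finsupp.add_apply,
    Nat.factorization_prod hpow, Finsupp.finsetSum_apply,
    sum_congr rfl fun p hp => by rw [(hA p hp).factorization_pow, Finsupp.single_apply],
    sum_ite_eq' A q e]

theorem Nat.factorization_gcd_div_self {d M : ℕ} (hM : M ≠ 0) (hd : d ∣ M) (p : ℕ) :
    (Nat.gcd d (M / d)).factorization p
      = min (d.factorization p) (M.factorization p - d.factorization p) := by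
  have hd0 : d ≠ 0 := ne_zero_of_dvd_ne_zero hM hd
  have hMd0 : M / d ≠ 0 := (Nat.div_ne_zero_iff_of_dvd hd).mpr ⟨hM, hd0⟩
  rw [Nat.factorization_gcd hd0 hMd0, Finsupp.inf_apply, Nat.factorization_div hd,
    Finsupp.tsub_apply]

theorem Nat.gcd_div_self_eq_iff {d M m : ℕ} (hM : M ≠ 0) (hd : d ∣ M) (hm : m ≠ 0) :
    Nat.gcd d (M / d) = m ↔
      ∀ p, min (d.factorization p) (M.factorization p - d.factorization p) = m.factorization p := by
  simp_rw [← Nat.factorization_gcd_div_self hM hd]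
  refine ⟨fun h p => h ▸ rfl, Nat.eq_of_factorization_eq ?_ hm⟩
  exact Nat.gcd_ne_zero_left (ne_zero_of_dvd_ne_zero hM hd)

theorem Nat.sq_dvd_mul_gcd {N k m : ℕ} (hm : m ∣ N) (h : m ^ 2 ∣ N * k) :
    m ^ 2 ∣ N * Nat.gcd m k := by
  rw [← Nat.gcd_mul_left, sq]
  exact Nat.dvd_gcd (by rw [mul_comm N]; exact mul_dvd_mul_left m hm) (sq m ▸ h)

section DivisorCount

variable {M n m : ℕ}

/-- The primes at which a divisor `d ∣ n` with `gcd d (M / d) = m` may have either of the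
two exponents `v_p(m)` and `v_p(M) - v_p(m)`. -/
def twoChoicePrimes (M n m : ℕ) : Finset ℕ :=
  M.primeFactors.filter fun p =>
    2 * m.factorization p < M.factorization p ∧
      M.factorization p ≤ m.factorization p + n.factorization p

theorem mem_twoChoicePrimes {p : ℕ} :
    p ∈ twoChoicePrimes M n m ↔
      2 * m.factorization p < M.factorization p ∧
        M.factorization p ≤ m.factorization p + n.factorization p := by
  rw [twoChoicePrimes, mem_filter, Nat.mem_primeFactors_iff_factorization_ne_zero]
  exact ⟨And.right, fun h => ⟨by omega, h⟩⟩

theorem two_mul_factorization_le_of_sq_dvd (hM : M ≠ 0) (hm2 : m ^ 2 ∣ M) (p : ℕ) :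
    2 * m.factorization p ≤ M.factorization p := by
  have hm : m ≠ 0 := pow_ne_zero_iff two_ne_zero |>.mp (ne_zero_of_dvd_ne_zero hM hm2)
  simpa [Nat.factorization_pow] using
    (Nat.factorization_le_iff_dvd (pow_ne_zero 2 hm) hM).mpr hm2 p

theorem mem_filter_divisors_gcd_div_self_eq_iff (hM : M ≠ 0) (hnM : n ∣ M) (hmn : m ∣ n)
    (hm2 : m ^ 2 ∣ M) {d : ℕ} :
    d ∈ n.divisors.filter (fun d => Nat.gcd d (M / d) = m) ↔
      d ≠ 0 ∧ ∀ p, d.factorization p = m.factorization p ∨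
        (p ∈ twoChoicePrimes M n m ∧ d.factorization p = M.factorization p - m.factorization p) := by
  have hn : n ≠ 0 := ne_zero_of_dvd_ne_zero hM hnM
  have hm : m ≠ 0 := ne_zero_of_dvd_ne_zero hn hmn
  have hmn' := (Nat.factorization_le_iff_dvd hm hn).mpr hmn
  have hnM' := (Nat.factorization_le_iff_dvd hn hM).mpr hnM
  have hm2' := two_mul_factorization_le_of_sq_dvd hM hm2
  rw [mem_filter]
  simp_rw [mem_twoChoicePrimes]
  constructor
  · rintro ⟨hdn, hgcd⟩
    obtain ⟨hdn, -⟩ := Nat.mem_divisors.mp hdn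
    have hd : d ≠ 0 := ne_zero_of_dvd_ne_zero hn hdn
    have hdn' := (Nat.factorization_le_iff_dvd hd hn).mpr hdn
    have hmin := (Nat.gcd_div_self_eq_iff hM (hdn.trans hnM) hm).mp hgcd
    refine ⟨hd, fun p => ?_⟩
    have := hmin p
    have := hdn' p
    have := hnM' p
    omega
  · rintro ⟨hd, hexp⟩
    have hdn : d ∣ n := (Nat.factorization_le_iff_dvd hd hn).mp fun p => by
      have := hexp p
      have := hmn' p
      omega
    refine ⟨Nat.mem_divisors.mpr ⟨hdn, hn⟩,
      (Nat.gcd_div_self_eq_iff hM (hdn.trans hnM) hm).mpr fun p => ?_⟩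
    have := hexp p
    have := hm2' p
    omega

def divisorOfPrimes (M m : ℕ) (A : Finset ℕ) : ℕ :=
  m * ∏ p ∈ A, p ^ (M.factorization p - 2 * m.factorization p)

theorem factorization_divisorOfPrimes (hm : m ≠ 0) {A : Finset ℕ}
    (hA : ∀ p ∈ A, p.Prime ∧ 2 * m.factorization p ≤ M.factorization p) (q : ℕ) :
    (divisorOfPrimes M m A).factorization q =
      if q ∈ A then M.factorization q - m.factorization q else m.factorization q := by
  rw [divisorOfPrimes, Nat.factorization_mul_prod_pow hm fun p hp => (hA p hp).1]
  split_ifs with hq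
  · have := (hA q hq).2
    omega
  · rfl

theorem card_filter_divisors_gcd_div_self_eq (hM : M ≠ 0) (hnM : n ∣ M) (hmn : m ∣ n)
    (hm2 : m ^ 2 ∣ M) :
    (n.divisors.filter fun d => Nat.gcd d (M / d) = m).card = 2 ^ (twoChoicePrimes M n m).card := by
  set P := twoChoicePrimes M n m
  have hm : m ≠ 0 := ne_zero_of_dvd_ne_zero (ne_zero_of_dvd_ne_zero hM hnM) hmn
  have hprime : ∀ p ∈ P, p.Prime := fun p hp => Nat.prime_of_mem_primeFactors (mem_filter.mp hp).1
  have hfact : ∀ A ⊆ P, ∀ q, (divisorOfPrimes M m A).factorization q =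
      if q ∈ A then M.factorization q - m.factorization q else m.factorization q :=
    fun A hA => factorization_divisorOfPrimes hm fun p hp =>
      ⟨hprime p (hA hp), (mem_twoChoicePrimes.mp (hA hp)).1.le⟩
  have hne : ∀ A ⊆ P, divisorOfPrimes M m A ≠ 0 := fun A hA =>
    mul_ne_zero hm (prod_ne_zero_iff.mpr fun p hp => pow_ne_zero _ (hprime p (hA hp)).ne_zero)
  have hmem := fun d => mem_filter_divisors_gcd_div_self_eq_iff hM hnM hmn hm2 (d := d)
  rw [← card_powerset P]
  refine card_nbij' (fun d => P.filter fun p => d.factorization p ≠ m.factorization p)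
    (divisorOfPrimes M m) (fun d _ => mem_powerset.mpr (filter_subset _ _)) (fun A hA => ?_)
    (fun d hd => ?_) (fun A hA => ?_)
  · rw [mem_coe, mem_powerset] at hA
    refine (hmem _).mpr ⟨hne A hA, fun p => ?_⟩
    rw [hfact A hA p]
    by_cases hp : p ∈ A
    · exact Or.inr ⟨hA hp, if_pos hp⟩
    · exact Or.inl (if_neg hp)
  · obtain ⟨hd, hexp⟩ := (hmem d).mp hd
    refine Nat.eq_of_factorization_eq (hne _ (filter_subset _ _)) hd fun p => ?_
    rw [hfact _ (filter_subset _ _)]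
    have := hexp p
    split_ifs with hp <;> rw [mem_filter] at hp <;> tauto
  · rw [mem_coe, mem_powerset] at hA
    ext p
    rw [mem_filter, hfact A hA]
    split_ifs with hp
    · have := mem_twoChoicePrimes.mp (hA hp)
      exact iff_of_true ⟨hA hp, by omega⟩ hp
    · simp [hp]

end DivisorCount

section OddCofactor

variable {N n k m : ℕ}

theorem factorization_mul_gcd_div_sq (hN : N ≠ 0) (hk : k ≠ 0) (hmN : m ∣ N)
    (hm2 : m ^ 2 ∣ N * k) (p : ℕ) :
    (N * Nat.gcd m k / m ^ 2).factorization p =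
      N.factorization p + min (m.factorization p) (k.factorization p) - 2 * m.factorization p := by
  have hm : m ≠ 0 := ne_zero_of_dvd_ne_zero hN hmN
  rw [Nat.factorization_div (Nat.sq_dvd_mul_gcd hmN hm2), Finsupp.tsub_apply,
    Nat.factorization_mul hN (Nat.gcd_ne_zero_left hm), Nat.factorization_gcd hm hk,
    Nat.factorization_pow]
  rfl

theorem factorization_div_gcd (hm : m ≠ 0) (hk : k ≠ 0) (p : ℕ) :
    (k / Nat.gcd m k).factorization p =
      k.factorization p - min (m.factorization p) (k.factorization p) := by
  rw [Nat.factorization_div (Nat.gcd_dvd_right m k), Nat.factorization_gcd hm hk]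
  rfl

theorem tm_of_odd (hk : Odd k) : tm N k m = if 4 ∣ N * Nat.gcd m k / m ^ 2 then 1 else 0 := by
  have hodd : Odd (k / Nat.gcd m k) := hk.of_dvd_nat (Nat.div_dvd_of_dvd (Nat.gcd_dvd_right m k))
  rw [Nat.odd_iff] at hk hodd
  simp only [tm, Nat.odd_iff]
  split_ifs <;> omega

theorem factorization_two_mul_of_ne_two (hn : n ≠ 0) {p : ℕ} (hp : p ≠ 2) :
    (2 * n).factorization p = n.factorization p := by
  rw [Nat.factorization_mul two_ne_zero hn, Finsupp.add_apply, Nat.prime_two.factorization,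
    Finsupp.single_eq_of_ne hp, zero_add]

theorem dvd_of_dvd_two_mul_of_sq_dvd_mul_odd (hn : n ≠ 0) (hk : Odd k) (hmn : m ∣ 2 * n)
    (hm2 : m ^ 2 ∣ n * k) : m ∣ n := by
  have hm : m ≠ 0 := ne_zero_of_dvd_ne_zero (mul_ne_zero two_ne_zero hn) hmn
  refine (Nat.factorization_le_iff_dvd hm hn).mp fun p => ?_
  by_cases hp : p = 2
  · subst hp
    have := two_mul_factorization_le_of_sq_dvd (mul_ne_zero hn hk.pos.ne') hm2 2
    rw [Nat.factorization_mul hn hk.pos.ne', Finsupp.add_apply,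
      Nat.factorization_eq_zero_of_not_dvd hk.not_two_dvd_nat] at this
    omega
  · rw [← factorization_two_mul_of_ne_two hn hp]
    exact (Nat.factorization_le_iff_dvd hm (mul_ne_zero two_ne_zero hn)).mpr hmn p

theorem filter_ne_two_twoChoicePrimes (hn : n ≠ 0) (hk : Odd k) (hmn : m ∣ 2 * n)
    (hm2 : m ^ 2 ∣ n * k) :
    (twoChoicePrimes (n * k) n m).filter (· ≠ 2) =
      (2 * n * Nat.gcd m k / m ^ 2).primeFactors.filter
        fun p => p ≠ 2 ∧ ¬ p ∣ k / Nat.gcd m k := by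
  have hk0 : k ≠ 0 := hk.pos.ne'
  have hm : m ≠ 0 := ne_zero_of_dvd_ne_zero (mul_ne_zero two_ne_zero hn) hmn
  have hm2N : m ^ 2 ∣ 2 * n * k := mul_assoc 2 n k ▸ dvd_mul_of_dvd_right hm2 2
  ext p
  simp only [mem_filter, mem_twoChoicePrimes, Nat.mem_primeFactors_iff_factorization_ne_zero]
  by_cases hp : p.Prime
  swap
  · simp [Nat.factorization_eq_zero_of_not_prime _ hp]
  by_cases hp2 : p = 2
  · simp [hp2]
  rw [hp.dvd_iff_one_le_factorization (Nat.div_ne_zero_iff_of_dvd (Nat.gcd_dvd_right m k)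
      |>.mpr ⟨hk0, Nat.gcd_ne_zero_left hm⟩),
    factorization_mul_gcd_div_sq (mul_ne_zero two_ne_zero hn) hk0 hmn hm2N,
    factorization_div_gcd hm hk0, Nat.factorization_mul hn hk0, Finsupp.add_apply,
    factorization_two_mul_of_ne_two hn hp2]
  omega

theorem two_mem_twoChoicePrimes_iff (hn : n ≠ 0) (hk : Odd k) (hmn : m ∣ 2 * n)
    (hm2 : m ^ 2 ∣ n * k) :
    2 ∈ twoChoicePrimes (n * k) n m ↔ 4 ∣ 2 * n * Nat.gcd m k / m ^ 2 := by
  have hk0 : k ≠ 0 := hk.pos.ne'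
  have hm2N : m ^ 2 ∣ 2 * n * k := mul_assoc 2 n k ▸ dvd_mul_of_dvd_right hm2 2
  have hQ : 2 * n * Nat.gcd m k / m ^ 2 ≠ 0 :=
    (Nat.div_ne_zero_iff_of_dvd (Nat.sq_dvd_mul_gcd hmn hm2N)).mpr
      ⟨mul_ne_zero (mul_ne_zero two_ne_zero hn) (Nat.gcd_ne_zero_right hk0),
        pow_ne_zero 2 (ne_zero_of_dvd_ne_zero (mul_ne_zero two_ne_zero hn) hmn)⟩
  have hk2 : k.factorization 2 = 0 := Nat.factorization_eq_zero_of_not_dvd hk.not_two_dvd_nat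
  have h2n : (2 * n).factorization 2 = 1 + n.factorization 2 := by
    rw [Nat.factorization_mul two_ne_zero hn, Finsupp.add_apply, Nat.Prime.factorization_self
      Nat.prime_two]
  rw [mem_twoChoicePrimes, show 4 = 2 ^ 2 by rfl, Nat.prime_two.pow_dvd_iff_le_factorization hQ,
    factorization_mul_gcd_div_sq (mul_ne_zero two_ne_zero hn) hk0 hmn hm2N, h2n, hk2,
    Nat.factorization_mul hn hk0, Finsupp.add_apply, hk2]
  omega

theorem card_twoChoicePrimes_eq_pm_add_tm (hn : n ≠ 0) (hk : Odd k) (hmn : m ∣ 2 * n)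
    (hm2 : m ^ 2 ∣ n * k) :
    (twoChoicePrimes (n * k) n m).card = pm (2 * n) k m + tm (2 * n) k m := by
  rw [← card_filter_add_card_filter_not (· ≠ 2), filter_ne_two_twoChoicePrimes hn hk hmn hm2,
    tm_of_odd hk]
  simp only [ne_eq, not_not, filter_eq', ← two_mem_twoChoicePrimes_iff hn hk hmn hm2]
  split_ifs <;> rfl

end OddCofactor

theorem card_divisors_with_gcd_eq_even_odd_case_general (N k m : ℕ) (hN : 0 < N) (hNeven : Even N)
    (hkodd : Odd k) (hm : m ∣ N) (hm2 : 2 * m ^ 2 ∣ N * k) :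
    ((N / 2).divisors.filter (fun d => Nat.gcd d (N * k / (2 * d)) = m)).card
      = 2 ^ (pm N k m + tm N k m) := by
  obtain ⟨n, rfl⟩ := hNeven.two_dvd
  have hn : n ≠ 0 := by omega
  have hm2' : m ^ 2 ∣ n * k := Nat.dvd_of_mul_dvd_mul_left two_pos (by rwa [mul_assoc] at hm2)
  have hquot (d : ℕ) : 2 * n * k / (2 * d) = n * k / d := by
    rw [mul_assoc, Nat.mul_div_mul_left _ _ two_pos]
  simp_rw [hquot, Nat.mul_div_cancel_left n two_pos]
  rw [card_filter_divisors_gcd_div_self_eq (mul_ne_zero hn hkodd.pos.ne') (dvd_mul_right n k)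
      (dvd_of_dvd_two_mul_of_sq_dvd_mul_odd hn hkodd hm hm2') hm2',
    card_twoChoicePrimes_eq_pm_add_tm hn hkodd hm hm2']

theorem card_divisors_with_gcd_eq_even_odd_case (N k m : ℕ) (hN : 0 < N) (hNeven : Even N)
    (hk : 0 < k) (hkodd : Odd k) (hm : m ∣ N) (hm2 : 2 * m ^ 2 ∣ N * k) :
    ((N / 2).divisors.filter (fun d => Nat.gcd d (N * k / (2 * d)) = m)).card
      = 2 ^ (pm N k m + tm N k m) :=
  card_divisors_with_gcd_eq_even_odd_case_general N k m hN hNeven hkodd hm hm2
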